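/- arXiv:1608.06340 — 6 statements merged into one kernel-verified Lean document; each statement's English description precedes it below -/
import Mathlib

section
/- Let (M, μ, η) be a monad on a category C. Then M is separable if and only if the counit ε of the Eilenberg–Moore adjunction F_M ⊣ U_M admits a section, i.e. there exists a natural transformation ξ : 1_{M-Alg} ⟶ U_M ⋙ F_M such that ε ∘ ξ is the identity natural transformation of 1_{M-Alg}. -/
/-!
A separability section `σ` gives, for every algebra `(A, a)`, the map
`ξ_A = M a ∘ σ_A ∘ η_A : A ⟶ M A`; it is split by `a` because `σ` splits `μ`, and the two
compatibilities of `σ` with `μ` are exactly what makes `ξ_A` a map of algebras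
`(A, a) ⟶ (M A, μ_A)`. Conversely, a section `ξ` of the counit restricts to free algebras as
`σ_X = ξ_{(M X, μ_X)}`: the compatibility `μM ∘ Mσ = σ ∘ μ` says that `ξ_{(M X, μ_X)}` is an
algebra map, and `Mμ ∘ σM = σ ∘ μ` is the naturality of `ξ` at the counit
`μ_X : (M M X, μ_{M X}) ⟶ (M X, μ_X)`.
-/

open CategoryTheory

universe v u

variable {C : Type u} [Category.{v} C]

namespace CategoryTheory.Monad

variable (M : Monad C)

structure IsSeparabilitySection (σ : M.toFunctor ⟶ M.toFunctor ⋙ M.toFunctor) : Prop where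
  app_comp_μ (X : C) : σ.app X ≫ M.μ.app X = 𝟙 (M.obj X)
  app_obj_comp_map_μ (X : C) : σ.app (M.obj X) ≫ M.map (M.μ.app X) = M.μ.app X ≫ σ.app X
  map_app_comp_μ (X : C) : M.map (σ.app X) ≫ M.μ.app (M.obj X) = M.μ.app X ≫ σ.app X

variable {M}

section SeparabilitySection

variable (σ : M.toFunctor ⟶ M.toFunctor ⋙ M.toFunctor)

def algebraSection (A : M.Algebra) : A.A ⟶ M.obj A.A :=
  M.η.app A.A ≫ σ.app A.A ≫ M.map A.a

variable {σ}

lemma algebraSection_comp_a (hσ : ∀ X, σ.app X ≫ M.μ.app X = 𝟙 (M.obj X)) (A : M.Algebra) :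
    algebraSection σ A ≫ A.a = 𝟙 A.A := by
  rw [algebraSection, Category.assoc, Category.assoc, ← A.assoc, reassoc_of% hσ, A.unit]

lemma algebraSection_naturality {A B : M.Algebra} (f : A ⟶ B) :
    algebraSection σ A ≫ M.map f.f = f.f ≫ algebraSection σ B := by
  simp only [algebraSection, Category.assoc, ← Functor.map_comp, ← f.h]
  rw [Functor.map_comp, ← Functor.comp_map, ← σ.naturality_assoc, M.unit_naturality_assoc]

lemma map_algebraSection_comp_μ (hσ : M.IsSeparabilitySection σ) (A : M.Algebra) :
    M.map (algebraSection σ A) ≫ M.μ.app A.A = σ.app A.A ≫ M.map A.a := by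
  simp only [algebraSection, Functor.map_comp, Category.assoc, M.mu_naturality]
  rw [reassoc_of% (hσ.map_app_comp_μ A.A), M.right_unit_assoc]

lemma a_comp_algebraSection (hσ : M.IsSeparabilitySection σ) (A : M.Algebra) :
    A.a ≫ algebraSection σ A = σ.app A.A ≫ M.map A.a := by
  rw [algebraSection, M.unit_naturality_assoc, σ.naturality_assoc, Functor.comp_map,
    ← Functor.map_comp, ← A.assoc, Functor.map_comp,
    reassoc_of% (hσ.app_obj_comp_map_μ A.A), M.left_unit_assoc]

def IsSeparabilitySection.counitSection (hσ : M.IsSeparabilitySection σ) :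
    𝟭 M.Algebra ⟶ M.forget ⋙ M.free where
  app A :=
    { f := algebraSection σ A
      h := (map_algebraSection_comp_μ hσ A).trans (a_comp_algebraSection hσ A).symm }
  naturality _ _ f := Algebra.Hom.ext (algebraSection_naturality f).symm

lemma IsSeparabilitySection.counitSection_comp_counit (hσ : M.IsSeparabilitySection σ) :
    hσ.counitSection ≫ M.adj.counit = 𝟙 (𝟭 M.Algebra) := by
  ext A
  simp only [NatTrans.comp_app, adj_counit]
  exact algebraSection_comp_a hσ.app_comp_μ A

end SeparabilitySection

section CounitSection

variable (ξ : 𝟭 M.Algebra ⟶ M.forget ⋙ M.free)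

def separabilitySectionOfCounitSection : M.toFunctor ⟶ M.toFunctor ⋙ M.toFunctor where
  app X := (ξ.app (M.free.obj X)).f
  naturality _ _ f := congrArg Algebra.Hom.f (ξ.naturality (M.free.map f))

variable {ξ}

lemma app_f_comp_a_of_comp_counit (hξ : ξ ≫ M.adj.counit = 𝟙 (𝟭 M.Algebra)) (A : M.Algebra) :
    (ξ.app A).f ≫ A.a = 𝟙 A.A := by
  have h := congrArg (fun τ => (τ.app A).f) hξ
  simp only [NatTrans.comp_app, adj_counit] at h
  exact h

lemma isSeparabilitySection_separabilitySectionOfCounitSection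
    (hξ : ξ ≫ M.adj.counit = 𝟙 (𝟭 M.Algebra)) :
    M.IsSeparabilitySection (separabilitySectionOfCounitSection ξ) where
  app_comp_μ X := app_f_comp_a_of_comp_counit hξ (M.free.obj X)
  app_obj_comp_map_μ X := by
    have h := congrArg Algebra.Hom.f (ξ.naturality (M.adj.counit.app (M.free.obj X)))
    simp only [adj_counit] at h
    exact h.symm
  map_app_comp_μ X := (ξ.app (M.free.obj X)).h

end CounitSection

end CategoryTheory.Monad

/-- a monad `M` is separable (i.e. `μ` admits a section `σ` with
`Mμ ∘ σM = σ ∘ μ = μM ∘ Mσ`) if and only if the counit of the Eilenberg–Moore adjunction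
`F_M ⊣ U_M` admits a section. -/
theorem separable_iff_counit_section (M : CategoryTheory.Monad C) :
    (∃ σ : M.toFunctor ⟶ M.toFunctor ⋙ M.toFunctor,
      (∀ X : C, σ.app X ≫ M.μ.app X = 𝟙 (M.toFunctor.obj X)) ∧
      (∀ X : C, σ.app (M.toFunctor.obj X) ≫ M.toFunctor.map (M.μ.app X) =
        M.μ.app X ≫ σ.app X) ∧
      (∀ X : C, M.toFunctor.map (σ.app X) ≫ M.μ.app (M.toFunctor.obj X) =
        M.μ.app X ≫ σ.app X)) ↔
    (∃ ξ : 𝟭 M.Algebra ⟶ M.forget ⋙ M.free, ξ ≫ M.adj.counit = 𝟙 (𝟭 M.Algebra)) := by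
  constructor
  · rintro ⟨σ, hμ, hμM, hMμ⟩
    have hσ : M.IsSeparabilitySection σ := ⟨hμ, hμM, hMμ⟩
    exact ⟨hσ.counitSection, hσ.counitSection_comp_counit⟩
  · rintro ⟨ξ, hξ⟩
    obtain ⟨hμ, hμM, hMμ⟩ := Monad.isSeparabilitySection_separabilitySectionOfCounitSection hξ
    exact ⟨_, hμ, hμM, hMμ⟩
end

section
/- Let (M, μ, η) be a monad on a category C with separability section σ : M ⟶ M ∘ M. For each M-algebra (X, λ) define ξ_{(X,λ)} := (Mλ) ∘ σ_X ∘ η_X : X → M X. Then: (i) ξ_{(X,λ)} is a morphism of M-algebras (X, λ) → (M X, μ_X); (ii) the ξ_{(X,λ)} assemble into a natural transformation ξ : 1_{M-Alg} ⟶ U_M ⋙ F_M; (iii) λ ∘ ξ_{(X,λ)} = id_X for every M-algebra (X, λ), i.e. ξ is a section of the counit of the Eilenberg–Moore adjunction. -/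
/-!
Write `ξ = η_X ≫ σ_X ≫ M a` for an algebra `a : M X ⟶ X`. The compatibilities of `σ` with `μ`,
combined with the unit laws, give `σ_X = M(η_X ≫ σ_X) ≫ μ_{MX} = η_{MX} ≫ σ_{MX} ≫ M μ_X`;
with these, both `M ξ ≫ μ_X` and `a ≫ ξ` reduce to `σ_X ≫ M a`, so `ξ` is an algebra map.
It is a section of `a` by `σ_X ≫ μ_X = 𝟙` and the two algebra laws.
-/

open CategoryTheory

universe v u

variable {C : Type u} [Category.{v} C]

namespace CategoryTheory.Monad

structure SeparabilitySection (M : Monad C) where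
  σ : M.toFunctor ⟶ M.toFunctor ⋙ M.toFunctor
  σ_μ : ∀ X : C, σ.app X ≫ M.μ.app X = 𝟙 (M.obj X)
  σ_map_μ : ∀ X : C, σ.app (M.obj X) ≫ M.map (M.μ.app X) = M.μ.app X ≫ σ.app X
  map_σ_μ : ∀ X : C, M.map (σ.app X) ≫ M.μ.app (M.obj X) = M.μ.app X ≫ σ.app X

namespace SeparabilitySection

variable {M : Monad C} (s : M.SeparabilitySection)

lemma σ_naturality {X Y : C} (f : X ⟶ Y) :
    M.map f ≫ s.σ.app Y = s.σ.app X ≫ M.map (M.map f) :=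
  s.σ.naturality f

lemma map_unit_σ_μ (X : C) :
    M.map (M.η.app X ≫ s.σ.app X) ≫ M.μ.app (M.obj X) = s.σ.app X := by
  rw [Functor.map_comp, Category.assoc, s.map_σ_μ, ← Category.assoc, M.right_unit,
    Category.id_comp]

lemma unit_σ_map_μ (X : C) :
    M.η.app (M.obj X) ≫ s.σ.app (M.obj X) ≫ M.map (M.μ.app X) = s.σ.app X := by
  rw [s.σ_map_μ, ← Category.assoc, M.left_unit, Category.id_comp]

def counitSectionApp (A : M.Algebra) : A ⟶ M.free.obj A.A where
  f := (M.η.app A.A ≫ s.σ.app A.A ≫ M.map A.a : A.A ⟶ M.obj A.A)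
  h := by
    have μ_nat : M.map (M.map A.a) ≫ M.μ.app A.A = M.μ.app (M.obj A.A) ≫ M.map A.a :=
      M.μ.naturality A.a
    have η_nat : A.a ≫ M.η.app A.A = M.η.app (M.obj A.A) ≫ M.map A.a :=
      M.η.naturality A.a
    calc M.map (M.η.app A.A ≫ s.σ.app A.A ≫ M.map A.a) ≫ M.μ.app A.A
        = M.map (M.η.app A.A ≫ s.σ.app A.A) ≫ M.μ.app (M.obj A.A) ≫ M.map A.a := by
          simp only [Functor.map_comp, Category.assoc, μ_nat]
      _ = s.σ.app A.A ≫ M.map A.a := by rw [← Category.assoc, s.map_unit_σ_μ]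
      _ = M.η.app (M.obj A.A) ≫ s.σ.app (M.obj A.A) ≫ M.map (M.μ.app A.A ≫ A.a) := by
          rw [Functor.map_comp, reassoc_of% s.unit_σ_map_μ A.A]
      _ = A.a ≫ M.η.app A.A ≫ s.σ.app A.A ≫ M.map A.a := by
          rw [A.assoc, Functor.map_comp, ← reassoc_of% s.σ_naturality A.a, ← reassoc_of% η_nat]

lemma unit_σ_map_a_comp_a (A : M.Algebra) :
    (M.η.app A.A ≫ s.σ.app A.A ≫ M.map A.a) ≫ A.a = 𝟙 A.A := by
  rw [Category.assoc, Category.assoc, ← A.assoc, reassoc_of% s.σ_μ A.A, A.unit]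

def counitSection : 𝟭 M.Algebra ⟶ M.forget ⋙ M.free where
  app := s.counitSectionApp
  naturality A B g := by
    ext
    have η_nat : g.f ≫ M.η.app B.A = M.η.app A.A ≫ M.map g.f := M.η.naturality g.f
    change g.f ≫ M.η.app B.A ≫ s.σ.app B.A ≫ M.map B.a =
      (M.η.app A.A ≫ s.σ.app A.A ≫ M.map A.a) ≫ M.map g.f
    rw [reassoc_of% η_nat, reassoc_of% s.σ_naturality g.f, ← M.map_comp, g.h, M.map_comp]
    simp only [Category.assoc]

end SeparabilitySection

end CategoryTheory.Monad

/-- if `σ` is a separability section of a monad `M`, then for each `M`-algebra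
`(X, λ)` the morphism `ξ_{(X,λ)} = (Mλ) ∘ σ_X ∘ η_X` is a morphism of `M`-algebras
`(X, λ) → (M X, μ_X)`, these assemble into a natural transformation
`ξ : 𝟭 ⟶ U_M ⋙ F_M`, and `ξ` is a section of the counit of the Eilenberg–Moore adjunction. -/
theorem separability_section_induces_counit_section (M : CategoryTheory.Monad C)
    (σ : M.toFunctor ⟶ M.toFunctor ⋙ M.toFunctor)
    (hσ : ∀ X : C, σ.app X ≫ M.μ.app X = 𝟙 (M.toFunctor.obj X))
    (hσl : ∀ X : C, σ.app (M.toFunctor.obj X) ≫ M.toFunctor.map (M.μ.app X) =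
      M.μ.app X ≫ σ.app X)
    (hσr : ∀ X : C, M.toFunctor.map (σ.app X) ≫ M.μ.app (M.toFunctor.obj X) =
      M.μ.app X ≫ σ.app X) :
    -- (i) `ξ_{(X,λ)}` is a morphism of `M`-algebras `(X, λ) → (M X, μ_X)`
    (∀ A : M.Algebra,
      M.toFunctor.map (M.η.app A.A ≫ σ.app A.A ≫ M.toFunctor.map A.a) ≫ M.μ.app A.A =
        A.a ≫ (M.η.app A.A ≫ σ.app A.A ≫ M.toFunctor.map A.a)) ∧
    -- (ii) these assemble into a natural transformation `ξ : 𝟭 ⟶ U_M ⋙ F_M`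
    (∃ ξ : 𝟭 M.Algebra ⟶ M.forget ⋙ M.free,
      ∀ A : M.Algebra, (ξ.app A).f = M.η.app A.A ≫ σ.app A.A ≫ M.toFunctor.map A.a) ∧
    -- (iii) `ξ` is a section of the counit: `λ ∘ ξ_{(X,λ)} = id`
    (∀ A : M.Algebra,
      (M.η.app A.A ≫ σ.app A.A ≫ M.toFunctor.map A.a) ≫ A.a = 𝟙 A.A) := by
  let s : M.SeparabilitySection := ⟨σ, hσ, hσl, hσr⟩
  exact ⟨fun A => (s.counitSectionApp A).h, ⟨s.counitSection, fun _ => rfl⟩,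
    s.unit_σ_map_a_comp_a⟩
end

section
/- Let (M, μ, η) be a monad on a category C and suppose ξ : 1_{M-Alg} ⟶ U_M ⋙ F_M is a natural transformation with ε ∘ ξ = id, where ε is the counit of the Eilenberg–Moore adjunction. Define σ : M ⟶ M ∘ M by σ_X := U_M(ξ_{(M X, μ_X)}) : M X → M² X, the component of ξ at the free algebra on X. Then σ is a separability section for M: it is natural, μ ∘ σ = id_M, and (Mμ) ∘ (σM) = σ ∘ μ = (μM) ∘ (Mσ). -/
open CategoryTheory

universe v u

variable {C : Type u} [Category.{v} C]

/-!
The component `ξ_{(M X, μ_X)}` is a morphism of algebras `(M X, μ_X) ⟶ (M² X, μ_{M X})`, which is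
exactly the identity `(Mσ) ≫ μM = μ ≫ σ`. Naturality of `ξ` along the algebra morphism
`ε_{F X} = μ_X : F (M X) ⟶ F X` gives `σM ≫ Mμ = μ ≫ σ`, and `ε ∘ ξ = id` at free algebras
gives `σ ≫ μ = id`.
-/

namespace CategoryTheory.Monad

variable (M : Monad C) (ξ : 𝟭 M.Algebra ⟶ M.forget ⋙ M.free)

@[simps]
def sectionOfFree : M.toFunctor ⟶ M.toFunctor ⋙ M.toFunctor where
  app X := (ξ.app (M.free.obj X)).f
  naturality _ _ g := congrArg Algebra.Hom.f (ξ.naturality (M.free.map g))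

theorem sectionOfFree_app_comp_μ (hξ : ξ ≫ M.adj.counit = 𝟙 (𝟭 M.Algebra)) (X : C) :
    (M.sectionOfFree ξ).app X ≫ M.μ.app X = 𝟙 (M.obj X) := by
  have h := congrArg (fun t => (t.app (M.free.obj X)).f) hξ
  simp only [NatTrans.comp_app, NatTrans.id_app, adj_counit, Algebra.id_f] at h
  exact h

theorem sectionOfFree_app_obj_comp_map_μ (X : C) :
    (M.sectionOfFree ξ).app (M.obj X) ≫ M.map (M.μ.app X) =
      M.μ.app X ≫ (M.sectionOfFree ξ).app X := by
  have h := congrArg Algebra.Hom.f (ξ.naturality (M.adj.counit.app (M.free.obj X)))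
  simp only [adj_counit, Algebra.comp_f] at h
  exact h.symm

theorem map_sectionOfFree_app_comp_μ (X : C) :
    M.map ((M.sectionOfFree ξ).app X) ≫ M.μ.app (M.obj X) =
      M.μ.app X ≫ (M.sectionOfFree ξ).app X :=
  (ξ.app (M.free.obj X)).h

end CategoryTheory.Monad

/-- if the counit of the Eilenberg–Moore adjunction of a monad `M` admits a
section `ξ`, then `σ_X := U_M(ξ_{(M X, μ_X)})`, the component of `ξ` at free algebras, is a
separability section for `M`: it is natural, a section of `μ`, and satisfies
`(Mμ) ∘ (σM) = σ ∘ μ = (μM) ∘ (Mσ)`. -/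
theorem counit_section_induces_separability_section (M : CategoryTheory.Monad C)
    (ξ : 𝟭 M.Algebra ⟶ M.forget ⋙ M.free)
    (hξ : ξ ≫ M.adj.counit = 𝟙 (𝟭 M.Algebra)) :
    ∃ σ : M.toFunctor ⟶ M.toFunctor ⋙ M.toFunctor,
      (∀ X : C, σ.app X = (ξ.app (M.free.obj X)).f) ∧
      (∀ X : C, σ.app X ≫ M.μ.app X = 𝟙 (M.toFunctor.obj X)) ∧
      (∀ X : C, σ.app (M.toFunctor.obj X) ≫ M.toFunctor.map (M.μ.app X) =
        M.μ.app X ≫ σ.app X) ∧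
      (∀ X : C, M.toFunctor.map (σ.app X) ≫ M.μ.app (M.toFunctor.obj X) =
        M.μ.app X ≫ σ.app X) :=
  ⟨M.sectionOfFree ξ, M.sectionOfFree_app ξ, M.sectionOfFree_app_comp_μ ξ hξ,
    M.sectionOfFree_app_obj_comp_map_μ ξ, M.map_sectionOfFree_app_comp_μ ξ⟩
end

section
/- Let (F, φ) : (C, M) → (C', M') be a strong monadic functor between categories with monads, and write ψ := φ⁻¹ : F ∘ M ⟶ M' ∘ F. Let σ and σ' be separability sections for M and M' respectively, compatible with ψ in the sense that (M'ψ) ∘ (ψM) ∘ (Fσ) = (σ'F) ∘ ψ, i.e. for all X: M'ψ_X ∘ ψ_{M X} ∘ F(σ_X) = σ'_{F X} ∘ ψ_X. Let ξ and ξ' be the induced sections of the Eilenberg–Moore counits, given by ξ_{(X,λ)} = (Mλ) ∘ σ_X ∘ η_X and ξ'_{(Y,ρ)} = (M'ρ) ∘ σ'_Y ∘ η'_Y. Then for every M-algebra (X, λ): ψ_X ∘ F(ξ_{(X,λ)}) = ξ'_{Mod(F,φ)(X,λ)} as morphisms F X → M'(F X). -/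
open CategoryTheory

universe v₁ v₂ u₁ u₂

variable {C : Type u₁} [Category.{v₁} C] {D : Type u₂} [Category.{v₂} D]

/-- A lax monadic functor `(F, φ) : (C, M) → (D, M')` between categories equipped with monads:
a functor `F : C ⥤ D` together with a natural transformation `φ : M' ∘ F ⟶ F ∘ M`
compatible with the multiplications and units of the two monads. -/
structure MonadicStr (M : CategoryTheory.Monad C) (M' : CategoryTheory.Monad D) (F : C ⥤ D) where
  φ : F ⋙ M'.toFunctor ⟶ M.toFunctor ⋙ F
  lax_unit : ∀ X : C, M'.η.app (F.obj X) ≫ φ.app X = F.map (M.η.app X)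
  lax_assoc : ∀ X : C, M'.μ.app (F.obj X) ≫ φ.app X =
    M'.toFunctor.map (φ.app X) ≫ φ.app (M.toFunctor.obj X) ≫ F.map (M.μ.app X)

namespace MonadicStr

variable {M : CategoryTheory.Monad C} {M' : CategoryTheory.Monad D} {F : C ⥤ D}

/-- The induced functor `Mod(F, φ)` between Eilenberg-Moore categories, sending an `M`-algebra
`(X, λ)` to the `M'`-algebra `(F X, F λ ∘ φ_X)` and an algebra morphism `f` to `F f`. -/
def Mod (S : MonadicStr M M' F) : M.Algebra ⥤ M'.Algebra where
  obj A :=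
    { A := F.obj A.A
      a := S.φ.app A.A ≫ F.map A.a
      unit := by
        rw [← Category.assoc, S.lax_unit, ← F.map_comp, A.unit]
        simp
      assoc := by
        have h1 : M'.toFunctor.map (F.map A.a) ≫ S.φ.app A.A
            = S.φ.app (M.toFunctor.obj A.A) ≫ F.map (M.toFunctor.map A.a) :=
          S.φ.naturality A.a
        have h2 : M.μ.app A.A ≫ A.a = M.toFunctor.map A.a ≫ A.a := A.assoc
        calc M'.μ.app (F.obj A.A) ≫ S.φ.app A.A ≫ F.map A.a
            = (M'.μ.app (F.obj A.A) ≫ S.φ.app A.A) ≫ F.map A.a := by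
              rw [Category.assoc]
          _ = (M'.toFunctor.map (S.φ.app A.A) ≫ S.φ.app (M.toFunctor.obj A.A)
                ≫ F.map (M.μ.app A.A)) ≫ F.map A.a := by rw [S.lax_assoc]
          _ = M'.toFunctor.map (S.φ.app A.A) ≫ S.φ.app (M.toFunctor.obj A.A)
                ≫ F.map (M.μ.app A.A ≫ A.a) := by simp [Category.assoc]
          _ = M'.toFunctor.map (S.φ.app A.A) ≫ S.φ.app (M.toFunctor.obj A.A)
                ≫ F.map (M.toFunctor.map A.a ≫ A.a) := by rw [h2]
          _ = M'.toFunctor.map (S.φ.app A.A) ≫ (S.φ.app (M.toFunctor.obj A.A)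
                ≫ F.map (M.toFunctor.map A.a)) ≫ F.map A.a := by simp [Category.assoc]
          _ = M'.toFunctor.map (S.φ.app A.A) ≫ (M'.toFunctor.map (F.map A.a)
                ≫ S.φ.app A.A) ≫ F.map A.a := by rw [h1]
          _ = M'.toFunctor.map (S.φ.app A.A ≫ F.map A.a) ≫ S.φ.app A.A ≫ F.map A.a := by
              simp [Category.assoc] }
  map {A B} f :=
    { f := F.map f.f
      h := by
        have h1 : M'.toFunctor.map (F.map f.f) ≫ S.φ.app B.A
            = S.φ.app A.A ≫ F.map (M.toFunctor.map f.f) :=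
          S.φ.naturality f.f
        have h2 : M.toFunctor.map f.f ≫ B.a = A.a ≫ f.f := f.h
        calc M'.toFunctor.map (F.map f.f) ≫ S.φ.app B.A ≫ F.map B.a
            = (M'.toFunctor.map (F.map f.f) ≫ S.φ.app B.A) ≫ F.map B.a := by
              rw [Category.assoc]
          _ = (S.φ.app A.A ≫ F.map (M.toFunctor.map f.f)) ≫ F.map B.a := by rw [h1]
          _ = S.φ.app A.A ≫ F.map (M.toFunctor.map f.f ≫ B.a) := by
              rw [Category.assoc, F.map_comp]
          _ = S.φ.app A.A ≫ F.map (A.a ≫ f.f) := by rw [h2]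
          _ = (S.φ.app A.A ≫ F.map A.a) ≫ F.map f.f := by
              rw [F.map_comp, Category.assoc] }
  map_id A := by
    apply Monad.Algebra.Hom.ext
    simp
  map_comp f g := by
    apply Monad.Algebra.Hom.ext
    simp

end MonadicStr

namespace MonadicStr

variable {M : CategoryTheory.Monad C} {M' : CategoryTheory.Monad D} {F : C ⥤ D}

theorem map_unit_comp_eq_of_φ_comp_eq_id (S : MonadicStr M M' F)
    {ψ : M.toFunctor ⋙ F ⟶ F ⋙ M'.toFunctor} (hψ : S.φ ≫ ψ = 𝟙 _) (X : C) :
    F.map (M.η.app X) ≫ ψ.app X = M'.η.app (F.obj X) := by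
  rw [← S.lax_unit, Category.assoc, ← NatTrans.comp_app, hψ]
  exact Category.comp_id _

theorem map_unit_comp_section_comp_inv (S : MonadicStr M M' F)
    {ψ : M.toFunctor ⋙ F ⟶ F ⋙ M'.toFunctor}
    (hψ₁ : S.φ ≫ ψ = 𝟙 _) (hψ₂ : ψ ≫ S.φ = 𝟙 _)
    {σ : M.toFunctor ⟶ M.toFunctor ⋙ M.toFunctor}
    {σ' : M'.toFunctor ⟶ M'.toFunctor ⋙ M'.toFunctor} {X : C}
    (hcompat : F.map (σ.app X) ≫ ψ.app (M.obj X) ≫ M'.map (ψ.app X) =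
      ψ.app X ≫ σ'.app (F.obj X)) :
    F.map (M.η.app X ≫ σ.app X) ≫ ψ.app (M.obj X) =
      M'.η.app (F.obj X) ≫ σ'.app (F.obj X) ≫ M'.map (S.φ.app X) := by
  have hσ : F.map (σ.app X) ≫ ψ.app (M.obj X) =
      ψ.app X ≫ σ'.app (F.obj X) ≫ M'.map (S.φ.app X) := by
    rw [← reassoc_of% hcompat, ← M'.map_comp, ← NatTrans.comp_app, hψ₂]
    simp
  rw [F.map_comp, Category.assoc, hσ, reassoc_of% S.map_unit_comp_eq_of_φ_comp_eq_id hψ₁ X]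

end MonadicStr

theorem compatible_sections_general (M : CategoryTheory.Monad C) (M' : CategoryTheory.Monad D)
    (F : C ⥤ D) (S : MonadicStr M M' F)
    (ψ : M.toFunctor ⋙ F ⟶ F ⋙ M'.toFunctor)
    (hψ₁ : S.φ ≫ ψ = 𝟙 (F ⋙ M'.toFunctor))
    (hψ₂ : ψ ≫ S.φ = 𝟙 (M.toFunctor ⋙ F))
    (σ : M.toFunctor ⟶ M.toFunctor ⋙ M.toFunctor)
    (σ' : M'.toFunctor ⟶ M'.toFunctor ⋙ M'.toFunctor)
    (hcompat : ∀ X : C,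
      F.map (σ.app X) ≫ ψ.app (M.toFunctor.obj X) ≫ M'.toFunctor.map (ψ.app X) =
        ψ.app X ≫ σ'.app (F.obj X)) :
    ∀ A : M.Algebra,
      F.map (M.η.app A.A ≫ σ.app A.A ≫ M.toFunctor.map A.a) ≫ ψ.app A.A =
        M'.η.app (F.obj A.A) ≫ σ'.app (F.obj A.A) ≫
          M'.toFunctor.map (S.φ.app A.A ≫ F.map A.a) := by
  intro A
  calc F.map (M.η.app A.A ≫ σ.app A.A ≫ M.toFunctor.map A.a) ≫ ψ.app A.A
      = F.map (M.η.app A.A ≫ σ.app A.A) ≫ ψ.app (M.obj A.A) ≫ M'.map (F.map A.a) := by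
        rw [← Category.assoc, F.map_comp, Category.assoc]
        exact congrArg _ (ψ.naturality A.a)
    _ = M'.η.app (F.obj A.A) ≫ σ'.app (F.obj A.A) ≫
          M'.toFunctor.map (S.φ.app A.A ≫ F.map A.a) := by
        rw [reassoc_of% S.map_unit_comp_section_comp_inv hψ₁ hψ₂ (hcompat A.A), M'.map_comp]

/-- for a strong monadic functor `(F, φ)` with `ψ := φ⁻¹`, and compatible
separability sections `σ`, `σ'` of `M`, `M'`, the induced sections `ξ`, `ξ'` of the
Eilenberg–Moore counits satisfy `ψ_X ∘ F(ξ_{(X,λ)}) = ξ'_{Mod(F,φ)(X,λ)}`. -/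
theorem compatible_sections (M : CategoryTheory.Monad C) (M' : CategoryTheory.Monad D)
    (F : C ⥤ D) (S : MonadicStr M M' F)
    (ψ : M.toFunctor ⋙ F ⟶ F ⋙ M'.toFunctor)
    (hψ₁ : S.φ ≫ ψ = 𝟙 (F ⋙ M'.toFunctor))
    (hψ₂ : ψ ≫ S.φ = 𝟙 (M.toFunctor ⋙ F))
    (σ : M.toFunctor ⟶ M.toFunctor ⋙ M.toFunctor)
    (hσ : ∀ X : C, σ.app X ≫ M.μ.app X = 𝟙 (M.toFunctor.obj X))
    (hσl : ∀ X : C, σ.app (M.toFunctor.obj X) ≫ M.toFunctor.map (M.μ.app X) =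
      M.μ.app X ≫ σ.app X)
    (hσr : ∀ X : C, M.toFunctor.map (σ.app X) ≫ M.μ.app (M.toFunctor.obj X) =
      M.μ.app X ≫ σ.app X)
    (σ' : M'.toFunctor ⟶ M'.toFunctor ⋙ M'.toFunctor)
    (hσ' : ∀ Y : D, σ'.app Y ≫ M'.μ.app Y = 𝟙 (M'.toFunctor.obj Y))
    (hσ'l : ∀ Y : D, σ'.app (M'.toFunctor.obj Y) ≫ M'.toFunctor.map (M'.μ.app Y) =
      M'.μ.app Y ≫ σ'.app Y)
    (hσ'r : ∀ Y : D, M'.toFunctor.map (σ'.app Y) ≫ M'.μ.app (M'.toFunctor.obj Y) =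
      M'.μ.app Y ≫ σ'.app Y)
    (hcompat : ∀ X : C,
      F.map (σ.app X) ≫ ψ.app (M.toFunctor.obj X) ≫ M'.toFunctor.map (ψ.app X) =
        ψ.app X ≫ σ'.app (F.obj X)) :
    ∀ A : M.Algebra,
      F.map (M.η.app A.A ≫ σ.app A.A ≫ M.toFunctor.map A.a) ≫ ψ.app A.A =
        M'.η.app (F.obj A.A) ≫ σ'.app (F.obj A.A) ≫
          M'.toFunctor.map (S.φ.app A.A ≫ F.map A.a) :=
  compatible_sections_general M M' F S ψ hψ₁ hψ₂ σ σ' hcompat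
end

section
/- (Doctrinal adjunction, right adjoints, in CAT.) Let (F, φ) : (C, M) → (C', M') be a lax monadic functor between categories with monads, and suppose F ⊣ G with unit u : 1_C ⟶ G ∘ F and counit c : F ∘ G ⟶ 1_{C'}. Then the following are equivalent: (i) φ is invertible; (ii) there exists a natural transformation ψ : M ∘ G ⟶ G ∘ M' making (G, ψ) a lax monadic functor (C', M') → (C, M) such that u is a monadic natural transformation from (1_C, id_M) to the composite (G∘F, (Gφ)∘(ψF)) and c is a monadic natural transformation from the composite (F∘G, (Fψ)∘(φG)) to (1_{C'}, id_{M'}). Moreover, when these hold, ψ is necessarily the mate of φ⁻¹, with component ψ_Y = G(M' c_Y) ∘ G(φ⁻¹_{G Y}) ∘ u_{M G Y}. -/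
/-!
Everything is transported along the mates bijection `(M ⋙ F ⟶ F ⋙ M') ≃ (G ⋙ M ⟶ M' ⋙ G)`
of `F ⊣ G`, comparing maps into `G Y` through their transposes `F f ≫ ε_Y`. If `ψ` is the mate
of `ι`, the counit is monadic exactly when `φ ≫ ι = 𝟙` and the unit is monadic exactly when
`ι ≫ φ = 𝟙`; so a suitable `ψ` exists iff `φ` is invertible, and then `ι = φ⁻¹`. Inverting the lax
laws of `φ` gives oplax laws for `φ⁻¹`, and the mate of an oplax structure on a left adjoint is a
lax structure on its right adjoint.
-/

open CategoryTheory

universe v₁ v₂ u₁ u₂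

variable {C : Type u₁} [Category.{v₁} C] {D : Type u₂} [Category.{v₂} D]

namespace CategoryTheory.Adjunction

variable {F : C ⥤ D} {G : D ⥤ C} (adj : F ⊣ G)

lemma hom_ext_of_map_comp_counit {X : C} {Y : D} {f g : X ⟶ G.obj Y}
    (h : F.map f ≫ adj.counit.app Y = F.map g ≫ adj.counit.app Y) : f = g :=
  (adj.homEquiv X Y).symm.injective (by simpa [homEquiv_counit] using h)

lemma eq_id_of_app_obj_comp_map_counit {E : Type*} [Category E] {H : D ⥤ E}
    (θ : F ⋙ H ⟶ F ⋙ H)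
    (h : ∀ Y : D, θ.app (G.obj Y) ≫ H.map (adj.counit.app Y) = H.map (adj.counit.app Y)) :
    θ = 𝟙 _ := by
  ext X
  have hθ : θ.app X ≫ H.map (F.map (adj.unit.app X)) =
      H.map (F.map (adj.unit.app X)) ≫ θ.app (G.obj (F.obj X)) :=
    (θ.naturality (adj.unit.app X)).symm
  calc θ.app X = θ.app X ≫ H.map (F.map (adj.unit.app X) ≫ adj.counit.app (F.obj X)) := by simp
    _ = H.map (F.map (adj.unit.app X)) ≫ θ.app (G.obj (F.obj X)) ≫
          H.map (adj.counit.app (F.obj X)) := by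
      rw [H.map_comp, reassoc_of% hθ]
    _ = 𝟙 _ := by rw [h, ← H.map_comp]; simp

section Endofunctors

variable {M : C ⥤ C} {M' : D ⥤ D}

def mate (ι : M ⋙ F ⟶ F ⋙ M') : G ⋙ M ⟶ M' ⋙ G :=
  (mateEquiv adj adj (TwoSquare.mk _ _ _ _ ι)).natTrans

lemma mate_surjective : Function.Surjective (adj.mate (M := M) (M' := M')) :=
  (mateEquiv adj adj).surjective

lemma map_mate_app_comp_counit (ι : M ⋙ F ⟶ F ⋙ M') (Y : D) :
    F.map ((adj.mate ι).app Y) ≫ adj.counit.app (M'.obj Y) =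
      ι.app (G.obj Y) ≫ M'.map (adj.counit.app Y) :=
  mateEquiv_counit adj adj ι Y

lemma map_unit_comp_mate_app (ι : M ⋙ F ⟶ F ⋙ M') (X : C) :
    M.map (adj.unit.app X) ≫ (adj.mate ι).app (F.obj X) =
      adj.unit.app (M.obj X) ≫ G.map (ι.app X) :=
  unit_mateEquiv adj adj ι X

lemma mate_app (ι : M ⋙ F ⟶ F ⋙ M') (Y : D) :
    (adj.mate ι).app Y =
      adj.unit.app (M.obj (G.obj Y)) ≫ G.map (ι.app (G.obj Y) ≫ M'.map (adj.counit.app Y)) :=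
  (adj.eq_unit_comp_map_iff _ _).2 (adj.map_mate_app_comp_counit ι Y)

def UnitIsMonadic (φ : F ⋙ M' ⟶ M ⋙ F) (ψ : G ⋙ M ⟶ M' ⋙ G) : Prop :=
  ∀ X : C, adj.unit.app (M.obj X) = M.map (adj.unit.app X) ≫ ψ.app (F.obj X) ≫ G.map (φ.app X)

def CounitIsMonadic (φ : F ⋙ M' ⟶ M ⋙ F) (ψ : G ⋙ M ⟶ M' ⋙ G) : Prop :=
  ∀ Y : D, φ.app (G.obj Y) ≫ F.map (ψ.app Y) ≫ adj.counit.app (M'.obj Y) =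
    M'.map (adj.counit.app Y)

lemma unitIsMonadic_mate_iff (φ : F ⋙ M' ⟶ M ⋙ F) (ι : M ⋙ F ⟶ F ⋙ M') :
    adj.UnitIsMonadic φ (adj.mate ι) ↔ ι ≫ φ = 𝟙 _ := by
  have key (X : C) : (adj.unit.app (M.obj X) =
      M.map (adj.unit.app X) ≫ (adj.mate ι).app (F.obj X) ≫ G.map (φ.app X)) ↔
        (ι ≫ φ).app X = 𝟙 _ := by
    simp only [Functor.comp_obj, Functor.id_obj, reassoc_of% adj.map_unit_comp_mate_app ι,
      ← G.map_comp]
    rw [← adj.homEquiv_unit, ← adj.homEquiv_id]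
    exact (adj.homEquiv _ _).apply_eq_iff_eq.trans eq_comm
  simp only [UnitIsMonadic, key]
  exact ⟨fun h => NatTrans.ext (funext h), fun h X => by simp [h]⟩

lemma counitIsMonadic_mate_iff (φ : F ⋙ M' ⟶ M ⋙ F) (ι : M ⋙ F ⟶ F ⋙ M') :
    adj.CounitIsMonadic φ (adj.mate ι) ↔ φ ≫ ι = 𝟙 _ := by
  simp only [CounitIsMonadic, map_mate_app_comp_counit]
  refine ⟨fun h => adj.eq_id_of_app_obj_comp_map_counit _ (by simpa using h), fun h Y => ?_⟩
  simpa using congr_arg (fun θ => NatTrans.app θ (G.obj Y) ≫ M'.map (adj.counit.app Y)) h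

end Endofunctors

section Monads

variable {M : Monad C} {M' : Monad D}

lemma η_app_comp_mate_app (ι : M.toFunctor ⋙ F ⟶ F ⋙ M'.toFunctor)
    (hι : ∀ X : C, F.map (M.η.app X) ≫ ι.app X = M'.η.app (F.obj X)) (Y : D) :
    M.η.app (G.obj Y) ≫ (adj.mate ι).app Y = G.map (M'.η.app Y) := by
  apply adj.hom_ext_of_map_comp_counit
  simp [map_mate_app_comp_counit, reassoc_of% hι, M'.unit_naturality]

lemma μ_app_comp_mate_app (ι : M.toFunctor ⋙ F ⟶ F ⋙ M'.toFunctor)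
    (hι : ∀ X : C, F.map (M.μ.app X) ≫ ι.app X =
      ι.app (M.obj X) ≫ M'.map (ι.app X) ≫ M'.μ.app (F.obj X)) (Y : D) :
    M.μ.app (G.obj Y) ≫ (adj.mate ι).app Y =
      M.map ((adj.mate ι).app Y) ≫ (adj.mate ι).app (M'.obj Y) ≫ G.map (M'.μ.app Y) := by
  apply adj.hom_ext_of_map_comp_counit
  have hψ := ι.naturality ((adj.mate ι).app Y)
  dsimp at hψ
  simp only [Functor.comp_obj, Functor.id_obj, Functor.map_comp, Category.assoc,
    counit_naturality, map_mate_app_comp_counit, reassoc_of% adj.map_mate_app_comp_counit ι,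
    reassoc_of% hι]
  rw [reassoc_of% hψ, ← M'.map_comp_assoc, map_mate_app_comp_counit, ← M'.mu_naturality]
  simp

end Monads

end CategoryTheory.Adjunction

namespace MonadicStr

variable {M : Monad C} {M' : Monad D} {F : C ⥤ D} (S : MonadicStr M M' F) [IsIso S.φ]

lemma map_η_comp_inv_φ_app (X : C) :
    F.map (M.η.app X) ≫ (inv S.φ).app X = M'.η.app (F.obj X) := by
  simp [← S.lax_unit]

lemma map_μ_comp_inv_φ_app (X : C) :
    F.map (M.μ.app X) ≫ (inv S.φ).app X =
      (inv S.φ).app (M.obj X) ≫ M'.map ((inv S.φ).app X) ≫ M'.μ.app (F.obj X) := by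
  rw [← cancel_mono (S.φ.app X)]
  simp [S.lax_assoc]

end MonadicStr

/-- doctrinal adjunction, right adjoints: for a lax monadic functor
`(F, φ) : (C, M) → (C', M')` and an adjunction `F ⊣ G` with unit `u` and counit `c`, `φ` is
invertible if and only if there exists `ψ : M ∘ G ⟶ G ∘ M'` making `(G, ψ)` a lax monadic
functor such that `u` and `c` are monadic natural transformations; moreover `ψ` is then
necessarily the mate of `φ⁻¹`. -/
theorem doctrinal_right_adjoint (M : CategoryTheory.Monad C) (M' : CategoryTheory.Monad D)
    (F : C ⥤ D) (S : MonadicStr M M' F) (G : D ⥤ C) (adj : F ⊣ G) :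
    (IsIso S.φ ↔
      ∃ ψ : G ⋙ M.toFunctor ⟶ M'.toFunctor ⋙ G,
        -- `(G, ψ)` is a lax monadic functor `(C', M') → (C, M)`
        (∀ Y : D, M.η.app (G.obj Y) ≫ ψ.app Y = G.map (M'.η.app Y)) ∧
        (∀ Y : D, M.μ.app (G.obj Y) ≫ ψ.app Y =
          M.toFunctor.map (ψ.app Y) ≫ ψ.app (M'.toFunctor.obj Y) ≫ G.map (M'.μ.app Y)) ∧
        -- `u` is a monadic natural transformation `(1_C, id_M) ⟶ (G ∘ F, (Gφ) ∘ (ψF))`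
        (∀ X : C, adj.unit.app (M.toFunctor.obj X) =
          M.toFunctor.map (adj.unit.app X) ≫ ψ.app (F.obj X) ≫ G.map (S.φ.app X)) ∧
        -- `c` is a monadic natural transformation `(F ∘ G, (Fψ) ∘ (φG)) ⟶ (1_{C'}, id_{M'})`
        (∀ Y : D, S.φ.app (G.obj Y) ≫ F.map (ψ.app Y) ≫
            adj.counit.app (M'.toFunctor.obj Y) = M'.toFunctor.map (adj.counit.app Y))) ∧
    -- moreover, such a `ψ` is necessarily the mate of `φ⁻¹`
    (∀ (ψ : G ⋙ M.toFunctor ⟶ M'.toFunctor ⋙ G)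
      (_ : ∀ Y : D, M.η.app (G.obj Y) ≫ ψ.app Y = G.map (M'.η.app Y))
      (_ : ∀ Y : D, M.μ.app (G.obj Y) ≫ ψ.app Y =
        M.toFunctor.map (ψ.app Y) ≫ ψ.app (M'.toFunctor.obj Y) ≫ G.map (M'.μ.app Y))
      (_ : ∀ X : C, adj.unit.app (M.toFunctor.obj X) =
        M.toFunctor.map (adj.unit.app X) ≫ ψ.app (F.obj X) ≫ G.map (S.φ.app X))
      (_ : ∀ Y : D, S.φ.app (G.obj Y) ≫ F.map (ψ.app Y) ≫
        adj.counit.app (M'.toFunctor.obj Y) = M'.toFunctor.map (adj.counit.app Y))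
      (φinv : M.toFunctor ⋙ F ⟶ F ⋙ M'.toFunctor)
      (_ : S.φ ≫ φinv = 𝟙 (F ⋙ M'.toFunctor)) (_ : φinv ≫ S.φ = 𝟙 (M.toFunctor ⋙ F)),
      ∀ Y : D, ψ.app Y =
        adj.unit.app (M.toFunctor.obj (G.obj Y)) ≫ G.map (φinv.app (G.obj Y)) ≫
          G.map (M'.toFunctor.map (adj.counit.app Y))) := by
  refine ⟨⟨fun _ => ?_, ?_⟩, ?_⟩
  · exact ⟨adj.mate (inv S.φ), adj.η_app_comp_mate_app _ S.map_η_comp_inv_φ_app,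
      adj.μ_app_comp_mate_app _ S.map_μ_comp_inv_φ_app,
      (adj.unitIsMonadic_mate_iff _ _).2 (by simp), (adj.counitIsMonadic_mate_iff _ _).2 (by simp)⟩
  · rintro ⟨ψ, -, -, hu, hc⟩
    obtain ⟨ι, rfl⟩ := adj.mate_surjective ψ
    exact ⟨⟨ι, (adj.counitIsMonadic_mate_iff _ _).1 hc, (adj.unitIsMonadic_mate_iff _ _).1 hu⟩⟩
  · intro ψ _ _ _ hc φinv _ hφinv Y
    obtain ⟨ι, rfl⟩ := adj.mate_surjective ψ
    have hι : ι = φinv := by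
      rw [← Category.id_comp ι, ← hφinv, Category.assoc,
        (adj.counitIsMonadic_mate_iff _ _).1 hc, Category.comp_id]
    rw [hι, adj.mate_app, G.map_comp]
end

section
/- (Doctrinal adjunction, left adjoints, in CAT.) Let (G, ψ) : (C', M') → (C, M) be a lax monadic functor between categories with monads, and suppose G has a left adjoint F : C ⥤ C' with unit u : 1_C ⟶ G ∘ F and counit c : F ∘ G ⟶ 1_{C'}. Let φ' : F ∘ M ⟶ M' ∘ F be the mate of ψ, with component φ'_X = c_{M' F X} ∘ F(ψ_{F X}) ∘ F(M u_X). Then the following are equivalent: (i) φ' is invertible; (ii) there exists a natural transformation φ : M' ∘ F ⟶ F ∘ M making (F, φ) a lax monadic functor (C, M) → (C', M') such that u is a monadic natural transformation from (1_C, id_M) to the composite (G∘F, (Gφ)∘(ψF)) and c is a monadic natural transformation from the composite (F∘G, (Fψ)∘(φG)) to (1_{C'}, id_{M'}). Moreover, when these hold, necessarily φ = (φ')⁻¹, so (F, φ) is strong. -/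
open CategoryTheory

universe v₁ v₂ u₁ u₂

variable {C : Type u₁} [Category.{v₁} C] {D : Type u₂} [Category.{v₂} D]

/-- The mate `φ' : F ∘ M ⟶ M' ∘ F` of `ψ : M ∘ G ⟶ G ∘ M'` along an adjunction `F ⊣ G`;
its component at `X` is `c_{M' F X} ∘ F(ψ_{F X}) ∘ F(M u_X)`. -/
def MonadicStr.mate {M : CategoryTheory.Monad C} {M' : CategoryTheory.Monad D}
    {G : D ⥤ C} (S : MonadicStr M' M G) {F : C ⥤ D} (adj : F ⊣ G) :
    M.toFunctor ⋙ F ⟶ F ⋙ M'.toFunctor :=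
  Functor.whiskerRight (Functor.whiskerRight adj.unit M.toFunctor) F ≫
    Functor.whiskerRight (Functor.whiskerLeft F S.φ) F ≫ Functor.whiskerLeft (F ⋙ M'.toFunctor) adj.counit

/-!
Transposing along `F ⊣ G` turns the mate `φ'` back into `ψ`, so the lax laws of `ψ` transpose to
colax laws for `φ'`. If `φ'` is invertible, its inverse is therefore lax, and monadicity of `u` and
`c` with respect to it are just the two transposition identities of the mate. Conversely, by the
triangle identities, monadicity of `u` forces `φ' ≫ φ = 𝟙` and monadicity of `c` forces
`φ ≫ φ' = 𝟙`.
-/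

lemma CategoryTheory.Adjunction.eq_of_unit_comp_map_eq {F : C ⥤ D} {G : D ⥤ C} (adj : F ⊣ G)
    {X : C} {Y : D} {f g : F.obj X ⟶ Y}
    (h : adj.unit.app X ≫ G.map f = adj.unit.app X ≫ G.map g) : f = g :=
  (adj.homEquiv X Y).injective (by simpa only [Adjunction.homEquiv_unit] using h)

namespace MonadicStr

variable {M : CategoryTheory.Monad C} {M' : CategoryTheory.Monad D} {F : C ⥤ D}

@[simps]
noncomputable def ofIsIsoColax (θ : M.toFunctor ⋙ F ⟶ F ⋙ M'.toFunctor) [IsIso θ]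
    (colax_unit : ∀ X : C, F.map (M.η.app X) ≫ θ.app X = M'.η.app (F.obj X))
    (colax_assoc : ∀ X : C, F.map (M.μ.app X) ≫ θ.app X =
      θ.app (M.toFunctor.obj X) ≫ M'.toFunctor.map (θ.app X) ≫ M'.μ.app (F.obj X)) :
    MonadicStr M M' F where
  φ := inv θ
  lax_unit X := by simp [← colax_unit]
  lax_assoc X := by
    rw [← cancel_mono (θ.app X)]
    simp [colax_assoc]

variable {G : D ⥤ C} (S : MonadicStr M' M G) (adj : F ⊣ G)

lemma mate_eq_mateEquiv_symm : S.mate adj = (mateEquiv adj adj).symm S.φ := by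
  ext X
  simp [mate, mateEquiv]

lemma unit_comp_map_mate_app (X : C) :
    adj.unit.app (M.toFunctor.obj X) ≫ G.map ((S.mate adj).app X) =
      M.toFunctor.map (adj.unit.app X) ≫ S.φ.app (F.obj X) := by
  rw [mate_eq_mateEquiv_symm]
  exact (unit_mateEquiv_symm adj adj S.φ X).symm

lemma map_φ_app_comp_counit (Y : D) :
    F.map (S.φ.app Y) ≫ adj.counit.app (M'.obj Y) =
      (S.mate adj).app (G.obj Y) ≫ M'.map (adj.counit.app Y) := by
  rw [mate_eq_mateEquiv_symm]
  exact mateEquiv_counit_symm adj adj S.φ Y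

lemma map_η_comp_mate_app (X : C) :
    F.map (M.η.app X) ≫ (S.mate adj).app X = M'.η.app (F.obj X) := by
  apply adj.eq_of_unit_comp_map_eq
  calc adj.unit.app X ≫ G.map (F.map (M.η.app X) ≫ (S.mate adj).app X)
      = M.η.app X ≫ M.map (adj.unit.app X) ≫ S.φ.app (F.obj X) := by
        simp [← unit_comp_map_mate_app]
    _ = adj.unit.app X ≫ M.η.app (G.obj (F.obj X)) ≫ S.φ.app (F.obj X) :=
        (M.η.naturality_assoc (adj.unit.app X) _).symm
    _ = adj.unit.app X ≫ G.map (M'.η.app (F.obj X)) := by rw [S.lax_unit]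

lemma map_μ_comp_mate_app (X : C) :
    F.map (M.μ.app X) ≫ (S.mate adj).app X =
      (S.mate adj).app (M.obj X) ≫ M'.map ((S.mate adj).app X) ≫ M'.μ.app (F.obj X) := by
  apply adj.eq_of_unit_comp_map_eq
  calc adj.unit.app (M.obj (M.obj X)) ≫ G.map (F.map (M.μ.app X) ≫ (S.mate adj).app X)
      = M.μ.app X ≫ M.map (adj.unit.app X) ≫ S.φ.app (F.obj X) := by
        simp [← unit_comp_map_mate_app]
    _ = M.map (M.map (adj.unit.app X)) ≫ M.μ.app (G.obj (F.obj X)) ≫ S.φ.app (F.obj X) :=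
        (M.μ.naturality_assoc (adj.unit.app X) _).symm
    _ = M.map (M.map (adj.unit.app X) ≫ S.φ.app (F.obj X)) ≫ S.φ.app (M'.obj (F.obj X)) ≫
          G.map (M'.μ.app (F.obj X)) := by
        rw [S.lax_assoc, Functor.map_comp_assoc]
    _ = M.map (adj.unit.app (M.obj X)) ≫ M.map (G.map ((S.mate adj).app X)) ≫
          S.φ.app (M'.obj (F.obj X)) ≫ G.map (M'.μ.app (F.obj X)) := by
        rw [← unit_comp_map_mate_app, Functor.map_comp_assoc]
    _ = adj.unit.app (M.obj (M.obj X)) ≫ G.map ((S.mate adj).app (M.obj X) ≫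
          M'.map ((S.mate adj).app X) ≫ M'.μ.app (F.obj X)) := by
        have hψ := S.φ.naturality ((S.mate adj).app X)
        dsimp at hψ
        simp [reassoc_of% hψ, reassoc_of% (S.unit_comp_map_mate_app adj (M.obj X))]

lemma comp_mate_eq_id (φ : F ⋙ M'.toFunctor ⟶ M.toFunctor ⋙ F)
    (hc : ∀ Y : D, φ.app (G.obj Y) ≫ F.map (S.φ.app Y) ≫
      adj.counit.app (M'.toFunctor.obj Y) = M'.toFunctor.map (adj.counit.app Y)) :
    φ ≫ S.mate adj = 𝟙 (F ⋙ M'.toFunctor) := by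
  ext X
  calc φ.app X ≫ (S.mate adj).app X
      = M'.map (F.map (adj.unit.app X)) ≫ φ.app (G.obj (F.obj X)) ≫
          F.map (S.φ.app (F.obj X)) ≫ adj.counit.app (M'.obj (F.obj X)) := by
        have hφ := φ.naturality (adj.unit.app X)
        dsimp at hφ
        simp [mate, reassoc_of% hφ]
    _ = M'.map (F.map (adj.unit.app X) ≫ adj.counit.app (F.obj X)) := by
        rw [hc, Functor.map_comp]
    _ = 𝟙 _ := by simp

lemma mate_comp_eq_id (φ : F ⋙ M'.toFunctor ⟶ M.toFunctor ⋙ F)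
    (hu : ∀ X : C, adj.unit.app (M.toFunctor.obj X) =
      M.toFunctor.map (adj.unit.app X) ≫ S.φ.app (F.obj X) ≫ G.map (φ.app X)) :
    S.mate adj ≫ φ = 𝟙 (M.toFunctor ⋙ F) := by
  ext X
  apply adj.eq_of_unit_comp_map_eq
  simp [reassoc_of% (S.unit_comp_map_mate_app adj X), ← hu]

end MonadicStr

/-- doctrinal adjunction, left adjoints: for a lax monadic functor
`(G, ψ) : (C', M') → (C, M)` and an adjunction `F ⊣ G` with unit `u` and counit `c`, the mate
`φ'` of `ψ` is invertible if and only if there exists `φ : M' ∘ F ⟶ F ∘ M` making `(F, φ)` a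
lax monadic functor such that `u` and `c` are monadic natural transformations; moreover such a
`φ` is necessarily the inverse of `φ'`, so `(F, φ)` is strong. -/
theorem doctrinal_left_adjoint (M : CategoryTheory.Monad C) (M' : CategoryTheory.Monad D)
    (G : D ⥤ C) (S : MonadicStr M' M G) (F : C ⥤ D) (adj : F ⊣ G) :
    (IsIso (S.mate adj) ↔
      ∃ φ : F ⋙ M'.toFunctor ⟶ M.toFunctor ⋙ F,
        -- `(F, φ)` is a lax monadic functor `(C, M) → (C', M')`
        (∀ X : C, M'.η.app (F.obj X) ≫ φ.app X = F.map (M.η.app X)) ∧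
        (∀ X : C, M'.μ.app (F.obj X) ≫ φ.app X =
          M'.toFunctor.map (φ.app X) ≫ φ.app (M.toFunctor.obj X) ≫ F.map (M.μ.app X)) ∧
        -- `u` is a monadic natural transformation `(1_C, id_M) ⟶ (G ∘ F, (Gφ) ∘ (ψF))`
        (∀ X : C, adj.unit.app (M.toFunctor.obj X) =
          M.toFunctor.map (adj.unit.app X) ≫ S.φ.app (F.obj X) ≫ G.map (φ.app X)) ∧
        -- `c` is a monadic natural transformation `(F ∘ G, (Fψ) ∘ (φG)) ⟶ (1_{C'}, id_{M'})`
        (∀ Y : D, φ.app (G.obj Y) ≫ F.map (S.φ.app Y) ≫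
          adj.counit.app (M'.toFunctor.obj Y) = M'.toFunctor.map (adj.counit.app Y))) ∧
    -- moreover, such a `φ` is necessarily the inverse of the mate `φ'`, so `(F, φ)` is strong
    (∀ (φ : F ⋙ M'.toFunctor ⟶ M.toFunctor ⋙ F)
      (_ : ∀ X : C, M'.η.app (F.obj X) ≫ φ.app X = F.map (M.η.app X))
      (_ : ∀ X : C, M'.μ.app (F.obj X) ≫ φ.app X =
        M'.toFunctor.map (φ.app X) ≫ φ.app (M.toFunctor.obj X) ≫ F.map (M.μ.app X))
      (_ : ∀ X : C, adj.unit.app (M.toFunctor.obj X) =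
        M.toFunctor.map (adj.unit.app X) ≫ S.φ.app (F.obj X) ≫ G.map (φ.app X))
      (_ : ∀ Y : D, φ.app (G.obj Y) ≫ F.map (S.φ.app Y) ≫
        adj.counit.app (M'.toFunctor.obj Y) = M'.toFunctor.map (adj.counit.app Y)),
      φ ≫ S.mate adj = 𝟙 (F ⋙ M'.toFunctor) ∧
        S.mate adj ≫ φ = 𝟙 (M.toFunctor ⋙ F)) := by
  refine ⟨⟨fun _ => ?_, fun ⟨φ, _, _, hu, hc⟩ => ⟨φ, S.mate_comp_eq_id adj φ hu,
    S.comp_mate_eq_id adj φ hc⟩⟩, fun φ _ _ hu hc => ⟨S.comp_mate_eq_id adj φ hc,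
    S.mate_comp_eq_id adj φ hu⟩⟩
  let T := MonadicStr.ofIsIsoColax (S.mate adj) (S.map_η_comp_mate_app adj)
    (S.map_μ_comp_mate_app adj)
  refine ⟨T.φ, T.lax_unit, T.lax_assoc, fun X => ?_, fun Y => ?_⟩
  · simp [T, ← reassoc_of% (S.unit_comp_map_mate_app adj X)]
  · simp [T, MonadicStr.map_φ_app_comp_counit]
end
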